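/- arXiv:1502.04334 — 3 statements merged into one kernel-verified Lean document; each statement's English description precedes it below -/
import Mathlib

section
/- Let 𝓛 be a configuration of d mutually distinct lines in the projective plane over a field K, and let P_1, …, P_r be pairwise distinct singular points of 𝓛. Then m_𝓛(P_1) + m_𝓛(P_2) + ⋯ + m_𝓛(P_r) ≤ d + binom(r, 2). In particular, any three distinct singular points satisfy m_1 + m_2 + m_3 ≤ d + 3 (Triangular Inequality), and any four distinct singular points satisfy m_1 + m_2 + m_3 + m_4 ≤ d + 6 (Quadrangle Inequality). -/
/-- Points of the projective plane over `K`. -/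
abbrev PPoint (K : Type*) [Field K] := Projectivization K (Fin 3 → K)

/-- Lines of the projective plane over `K`: points of the projectivization of the dual space. -/
abbrev PLine (K : Type*) [Field K] := Projectivization K (Module.Dual K (Fin 3 → K))

/-- A point lies on a line iff a representative functional of the line vanishes on a
representative vector of the point. -/
def OnLine {K : Type*} [Field K] (P : PPoint K) (L : PLine K) : Prop :=
  L.rep P.rep = 0

/-- The multiplicity of a point `P` with respect to a configuration `𝓛`:
the number of lines of `𝓛` passing through `P`. -/
noncomputable def mult {K : Type*} [Field K] (𝓛 : Finset (PLine K)) (P : PPoint K) : ℕ :=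
  {L : PLine K | L ∈ 𝓛 ∧ OnLine P L}.ncard

/-- The singular points of a configuration: points lying on at least two of its lines. -/
def SingPts {K : Type*} [Field K] (𝓛 : Finset (PLine K)) : Set (PPoint K) :=
  {P | 2 ≤ mult 𝓛 P}

/-- `tk 𝓛 k` is the number of points of multiplicity exactly `k` (used for `k ≥ 2`). -/
noncomputable def tk {K : Type*} [Field K] (𝓛 : Finset (PLine K)) (k : ℕ) : ℕ :=
  {P : PPoint K | mult 𝓛 P = k}.ncard

/-- The linear Harbourne constant of a configuration `𝓛` of lines:
`(d² − Σ_P m_𝓛(P)²)/s` where the sum runs over the `s` singular points of `𝓛`. -/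
noncomputable def HL {K : Type*} [Field K] (𝓛 : Finset (PLine K)) : ℚ :=
  ((𝓛.card : ℚ) ^ 2 - ∑ᶠ P ∈ SingPts 𝓛, (mult 𝓛 P : ℚ) ^ 2) / ((SingPts 𝓛).ncard : ℚ)

/-- Two functionals on `K³` vanishing on two linearly independent vectors are proportional. -/
lemma dual_prop {K : Type*} [Field K] {p q : Fin 3 → K} (hpq : LinearIndependent K ![p, q])
    {f g : Module.Dual K (Fin 3 → K)} (hf : f ≠ 0) (hg : g ≠ 0)
    (hfp : f p = 0) (hfq : f q = 0) (hgp : g p = 0) (hgq : g q = 0) :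
    ∃ c : Kˣ, c • g = f := by
  set W := (Submodule.span K {p, q}).dualAnnihilator with hW
  have hmem : ∀ (φ : Module.Dual K (Fin 3 → K)), φ p = 0 → φ q = 0 → φ ∈ W := by
    intro φ h1 h2
    rw [hW, Submodule.mem_dualAnnihilator]
    intro w hw
    obtain ⟨a, b, rfl⟩ := Submodule.mem_span_pair.mp hw
    simp [h1, h2]
  have hfW : f ∈ W := hmem f hfp hfq
  have hgW : g ∈ W := hmem g hgp hgq
  have hspan : Module.finrank K (Submodule.span K {p, q}) = 2 := by
    have h := finrank_span_eq_card hpq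
    rw [show Set.range ![p, q] = {p, q} by ext x; simp [Fin.exists_fin_two, or_comm]] at h
    simpa using h
  have hdim : Module.finrank K W = 1 := by
    have h1 : Module.finrank K ((Fin 3 → K) ⧸ Submodule.span K {p, q}) = Module.finrank K W :=
      LinearEquiv.finrank_eq (Subspace.quotEquivAnnihilator (Submodule.span K {p, q}))
    have h2 := Submodule.finrank_quotient_add_finrank (Submodule.span K {p, q})
    have h3 : Module.finrank K (Fin 3 → K) = 3 := by simp
    omega
  have hgne : (⟨g, hgW⟩ : W) ≠ 0 := by
    simp only [ne_eq, Submodule.mk_eq_zero]; exact hg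
  have htop := (finrank_eq_one_iff_of_nonzero (⟨g, hgW⟩ : W) hgne).mp hdim
  have hfmem : (⟨f, hfW⟩ : W) ∈ Submodule.span K {(⟨g, hgW⟩ : W)} := htop ▸ Submodule.mem_top
  obtain ⟨c, hc⟩ := Submodule.mem_span_singleton.mp hfmem
  have hc' : c • g = f := by
    have := congrArg Subtype.val hc; simpa using this
  have hcne : c ≠ 0 := by
    rintro rfl; simp at hc'; exact hf hc'.symm
  exact ⟨Units.mk0 c hcne, hc'⟩

/-- Through two distinct points passes at most one line. -/
lemma line_unique {K : Type*} [Field K] {Pp Q : PPoint K} (hne : Pp ≠ Q) {L M : PLine K}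
    (h1 : OnLine Pp L) (h2 : OnLine Q L) (h3 : OnLine Pp M) (h4 : OnLine Q M) :
    L = M := by
  have hpq : LinearIndependent K ![Pp.rep, Q.rep] := by
    rw [linearIndependent_fin2]
    refine ⟨by simpa using Q.rep_nonzero, fun a ha => ?_⟩
    simp only [Matrix.cons_val_one, Matrix.head_cons, Matrix.cons_val_zero] at ha
    have hane : a ≠ 0 := by
      rintro rfl; exact Pp.rep_nonzero (by simpa using ha.symm)
    apply hne
    rw [← Pp.mk_rep, ← Q.mk_rep]
    exact (Projectivization.mk_eq_mk_iff K _ _ _ _).mpr ⟨Units.mk0 a hane, ha⟩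
  obtain ⟨c, hc⟩ := dual_prop hpq L.rep_nonzero M.rep_nonzero h1 h2 h3 h4
  rw [← L.mk_rep, ← M.mk_rep]
  exact (Projectivization.mk_eq_mk_iff K _ _ _ _).mpr ⟨c, hc⟩

lemma nat_le_one_add_choose (n : ℕ) : n ≤ 1 + n.choose 2 := by
  cases n with
  | zero => simp
  | succ m =>
    have : (m + 1).choose 2 = m.choose 1 + m.choose 2 := Nat.choose_succ_succ m 1
    rw [this, Nat.choose_one_right]
    omega

/-- For pairwise distinct singular points `P 1, …, P r` of a configuration of `d` lines,
`m(P 1) + ⋯ + m(P r) ≤ d + C(r,2)`.  (For `r = 3` this is the Triangular Inequality and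
for `r = 4` the Quadrangle Inequality.) -/
theorem sum_mult_le {K : Type*} [Field K] (d : ℕ) (𝓛 : Finset (PLine K))
    (hd : 𝓛.card = d) (r : ℕ) (P : Fin r → PPoint K) (hinj : Function.Injective P)
    (hsing : ∀ i, P i ∈ SingPts 𝓛) :
    ∑ i, mult 𝓛 (P i) ≤ d + Nat.choose r 2 := by
  classical
  subst hd
  set T : PLine K → Finset (Fin r) := fun L => Finset.univ.filter (fun i => OnLine (P i) L)
    with hT
  have hmult : ∀ p : PPoint K, mult 𝓛 p = (𝓛.filter (fun L => OnLine p L)).card := by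
    intro p
    unfold mult
    rw [show {L : PLine K | L ∈ 𝓛 ∧ OnLine p L} = ↑(𝓛.filter (fun L => OnLine p L)) by
      ext L; simp]
    rw [Set.ncard_coe_finset]
  have hswap : ∑ i, mult 𝓛 (P i) = ∑ L ∈ 𝓛, (T L).card := by
    simp only [hmult, Finset.card_filter, hT]
    rw [Finset.sum_comm]
  rw [hswap]
  have hdisj : ∀ L ∈ 𝓛, ∀ M ∈ 𝓛, L ≠ M →
      Disjoint ((T L).powersetCard 2) ((T M).powersetCard 2) := by
    intro L _ M _ hLM
    rw [Finset.disjoint_left]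
    intro s hsL hsM
    obtain ⟨hsubL, hcard⟩ := Finset.mem_powersetCard.mp hsL
    obtain ⟨hsubM, _⟩ := Finset.mem_powersetCard.mp hsM
    obtain ⟨i, j, hij, rfl⟩ := Finset.card_eq_two.mp hcard
    have hiL : OnLine (P i) L := by
      have := hsubL (Finset.mem_insert_self i {j}); simpa [hT] using this
    have hjL : OnLine (P j) L := by
      have := hsubL (Finset.mem_insert_of_mem (Finset.mem_singleton_self j))
      simpa [hT] using this
    have hiM : OnLine (P i) M := by
      have := hsubM (Finset.mem_insert_self i {j}); simpa [hT] using this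
    have hjM : OnLine (P j) M := by
      have := hsubM (Finset.mem_insert_of_mem (Finset.mem_singleton_self j))
      simpa [hT] using this
    exact hLM (line_unique (fun h => hij (hinj h)) hiL hjL hiM hjM)
  have hpairs : ∑ L ∈ 𝓛, ((T L).card).choose 2 ≤ r.choose 2 := by
    have h1 : ∀ L, ((T L).card).choose 2 = ((T L).powersetCard 2).card :=
      fun L => (Finset.card_powersetCard 2 (T L)).symm
    simp only [h1]
    rw [← Finset.card_biUnion hdisj]
    have hsub : 𝓛.biUnion (fun L => (T L).powersetCard 2) ⊆
        (Finset.univ : Finset (Fin r)).powersetCard 2 := by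
      intro s hs
      obtain ⟨L, _, hsL⟩ := Finset.mem_biUnion.mp hs
      obtain ⟨_, hcard⟩ := Finset.mem_powersetCard.mp hsL
      exact Finset.mem_powersetCard.mpr ⟨Finset.subset_univ s, hcard⟩
    calc (𝓛.biUnion (fun L => (T L).powersetCard 2)).card
        ≤ ((Finset.univ : Finset (Fin r)).powersetCard 2).card := Finset.card_le_card hsub
      _ = r.choose 2 := by rw [Finset.card_powersetCard]; simp
  calc ∑ L ∈ 𝓛, (T L).card ≤ ∑ L ∈ 𝓛, (1 + ((T L).card).choose 2) :=
        Finset.sum_le_sum (fun L _ => nat_le_one_add_choose (T L).card)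
    _ = 𝓛.card + ∑ L ∈ 𝓛, ((T L).card).choose 2 := by
        rw [Finset.sum_add_distrib, Finset.sum_const, smul_eq_mul, mul_one]
    _ ≤ 𝓛.card + r.choose 2 := by omega
end

section
/- (Two Pencils Inequality, case a) Let 𝓛 be a configuration of d mutually distinct lines in the projective plane over a field K with exactly s singular points, s ≥ 2, and let P_1 and P_2 be two distinct singular points of 𝓛 such that no line of 𝓛 passes through both P_1 and P_2. Then m_𝓛(P_1)·m_𝓛(P_2) + 2 ≤ s. -/
/-!
Every line of the pencil through `P₁` meets every line of the pencil through `P₂`. Since no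
line of `𝓛` contains both points, such a pair consists of two distinct lines of `𝓛`, so their
intersection is a singular point, different from `P₁` and `P₂`. Two distinct points lie on at
most one line, so distinct pairs give distinct intersection points: this yields
`m(P₁)·m(P₂)` singular points besides `P₁` and `P₂`.
-/

open Module Submodule

theorem Projectivization.mk_eq_mk_of_finrank_eq_one {K V : Type*} [Field K] [AddCommGroup V]
    [Module K V] {W : Submodule K V} (hW : finrank K W = 1) {u v : V} (hu : u ≠ 0) (hv : v ≠ 0)
    (huW : u ∈ W) (hvW : v ∈ W) : mk K u hu = mk K v hv := by
  obtain ⟨c, hc⟩ :=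
    (finrank_eq_one_iff_of_nonzero' ⟨u, huW⟩ (by simpa using hu)).mp hW ⟨v, hvW⟩
  exact ((mk_eq_mk_iff' K v u hv hu).mpr ⟨c, congrArg Subtype.val hc⟩).symm

section Incidence

variable {K : Type*} [Field K]

theorem onLine_mk_iff {v : Fin 3 → K} (hv : v ≠ 0) (L : PLine K) :
    OnLine (Projectivization.mk K v hv) L ↔ L.rep v = 0 := by
  obtain ⟨a, ha⟩ := Projectivization.exists_smul_eq_mk_rep K v hv
  rw [OnLine, ← ha, Units.smul_def, map_smul, smul_eq_zero, or_iff_right a.ne_zero]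

theorem exists_onLine_onLine (L M : PLine K) : ∃ Q : PPoint K, OnLine Q L ∧ OnLine Q M := by
  set U := span K (Set.range ![L.rep, M.rep])
  have hU : finrank K U ≤ 2 := (finrank_range_le_card (R := K) _).trans (by simp)
  have hW : finrank K U.dualCoannihilator ≠ 0 := by
    have h := Subspace.finrank_add_finrank_dualCoannihilator_eq U
    rw [Module.finrank_fin_fun] at h
    omega
  obtain ⟨v, hv, hv0⟩ := exists_mem_ne_zero_of_ne_bot (p := U.dualCoannihilator)
    (by rintro h; rw [h, finrank_bot] at hW; exact hW rfl)
  rw [← SetLike.mem_coe, coe_dualCoannihilator_span] at hv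
  refine ⟨Projectivization.mk K v hv0, ?_, ?_⟩ <;> rw [onLine_mk_iff] <;> apply hv <;> simp

theorem eq_of_onLine_of_onLine {P Q : PPoint K} (hPQ : P ≠ Q) {L M : PLine K}
    (hPL : OnLine P L) (hQL : OnLine Q L) (hPM : OnLine P M) (hQM : OnLine Q M) : L = M := by
  -- both representatives lie in the annihilator of `span {P, Q}`, which is one-dimensional
  set U := span K (Set.range (Projectivization.rep ∘ ![P, Q]))
  have hU : finrank K U = 2 := by
    have h := (Projectivization.independent_pair_iff_ne P Q).mpr hPQ
    rw [Projectivization.independent_iff] at h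
    simpa using finrank_span_eq_card h
  have hW : finrank K U.dualAnnihilator = 1 := by
    have h := Subspace.finrank_add_finrank_dualAnnihilator_eq U
    rw [Module.finrank_fin_fun] at h
    omega
  have hmem : ∀ N : PLine K, OnLine P N → OnLine Q N → N.rep ∈ U.dualAnnihilator := by
    intro N hP hQ
    rw [← SetLike.mem_coe, coe_dualAnnihilator_span, Set.mem_ofPred_eq, Set.range_subset_iff]
    simpa [Fin.forall_fin_two] using ⟨hP, hQ⟩
  rw [← L.mk_rep, ← M.mk_rep]
  exact Projectivization.mk_eq_mk_of_finrank_eq_one hW _ _ (hmem L hPL hQL) (hmem M hPM hQM)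

end Incidence

section Configuration

variable {K : Type*} [Field K]

/-- A chosen common point of `L` and `M`; it is unique when `L ≠ M`. -/
noncomputable def meet (L M : PLine K) : PPoint K := (exists_onLine_onLine L M).choose

theorem onLine_meet_left (L M : PLine K) : OnLine (meet L M) L :=
  (exists_onLine_onLine L M).choose_spec.1

theorem onLine_meet_right (L M : PLine K) : OnLine (meet L M) M :=
  (exists_onLine_onLine L M).choose_spec.2

open Classical in
noncomputable def pencil (𝓛 : Finset (PLine K)) (P : PPoint K) : Finset (PLine K) :=
  𝓛.filter (OnLine P)

theorem mem_pencil {𝓛 : Finset (PLine K)} {P : PPoint K} {L : PLine K} :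
    L ∈ pencil 𝓛 P ↔ L ∈ 𝓛 ∧ OnLine P L := by
  classical
  simp [pencil]

theorem card_pencil (𝓛 : Finset (PLine K)) (P : PPoint K) : (pencil 𝓛 P).card = mult 𝓛 P := by
  rw [mult, ← Set.ncard_coe_finset]
  congr 1
  ext L
  simp [mem_pencil]

theorem mem_singPts_of_onLine {𝓛 : Finset (PLine K)} {Q : PPoint K} {L M : PLine K}
    (hL : L ∈ 𝓛) (hM : M ∈ 𝓛) (hLM : L ≠ M) (hQL : OnLine Q L) (hQM : OnLine Q M) :
    Q ∈ SingPts 𝓛 := by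
  classical
  have hsub : {L, M} ⊆ pencil 𝓛 Q := by
    simp [Finset.insert_subset_iff, mem_pencil, *]
  simpa [SingPts, ← card_pencil, Finset.card_pair hLM] using Finset.card_le_card hsub

variable {𝓛 : Finset (PLine K)} {P₁ P₂ : PPoint K}

theorem meet_ne_left (hnoline : ¬ ∃ L ∈ 𝓛, OnLine P₁ L ∧ OnLine P₂ L) (L : PLine K)
    {M : PLine K} (hM : M ∈ pencil 𝓛 P₂) : meet L M ≠ P₁ := fun h =>
  hnoline ⟨M, (mem_pencil.1 hM).1, h ▸ onLine_meet_right L M, (mem_pencil.1 hM).2⟩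

theorem meet_ne_right (hnoline : ¬ ∃ L ∈ 𝓛, OnLine P₁ L ∧ OnLine P₂ L) {L : PLine K}
    (hL : L ∈ pencil 𝓛 P₁) (M : PLine K) : meet L M ≠ P₂ := fun h =>
  hnoline ⟨L, (mem_pencil.1 hL).1, (mem_pencil.1 hL).2, h ▸ onLine_meet_left L M⟩

open Classical in
noncomputable def pencilIntersections (𝓛 : Finset (PLine K)) (P₁ P₂ : PPoint K) :
    Finset (PPoint K) :=
  (pencil 𝓛 P₁ ×ˢ pencil 𝓛 P₂).image fun p => meet p.1 p.2

theorem mem_pencilIntersections {Q : PPoint K} :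
    Q ∈ pencilIntersections 𝓛 P₁ P₂ ↔
      ∃ L ∈ pencil 𝓛 P₁, ∃ M ∈ pencil 𝓛 P₂, meet L M = Q := by
  simp [pencilIntersections, and_assoc]

theorem left_notMem_pencilIntersections (hnoline : ¬ ∃ L ∈ 𝓛, OnLine P₁ L ∧ OnLine P₂ L) :
    P₁ ∉ pencilIntersections 𝓛 P₁ P₂ := by
  rintro h
  obtain ⟨L, -, M, hM, hLM⟩ := mem_pencilIntersections.1 h
  exact meet_ne_left hnoline L hM hLM

theorem right_notMem_pencilIntersections (hnoline : ¬ ∃ L ∈ 𝓛, OnLine P₁ L ∧ OnLine P₂ L) :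
    P₂ ∉ pencilIntersections 𝓛 P₁ P₂ := by
  rintro h
  obtain ⟨L, hL, M, -, hLM⟩ := mem_pencilIntersections.1 h
  exact meet_ne_right hnoline hL M hLM

theorem coe_pencilIntersections_subset_singPts
    (hnoline : ¬ ∃ L ∈ 𝓛, OnLine P₁ L ∧ OnLine P₂ L) :
    ↑(pencilIntersections 𝓛 P₁ P₂) ⊆ SingPts 𝓛 := by
  intro Q hQ
  obtain ⟨L, hL, M, hM, rfl⟩ := mem_pencilIntersections.1 hQ
  rw [mem_pencil] at hL hM
  have hLM : L ≠ M := by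
    rintro rfl
    exact hnoline ⟨L, hL.1, hL.2, hM.2⟩
  exact mem_singPts_of_onLine hL.1 hM.1 hLM (onLine_meet_left L M) (onLine_meet_right L M)

theorem card_pencilIntersections (hnoline : ¬ ∃ L ∈ 𝓛, OnLine P₁ L ∧ OnLine P₂ L) :
    (pencilIntersections 𝓛 P₁ P₂).card = mult 𝓛 P₁ * mult 𝓛 P₂ := by
  classical
  rw [pencilIntersections, Finset.card_image_of_injOn, Finset.card_product, card_pencil,
    card_pencil]
  rintro ⟨L, M⟩ hLM ⟨L', M'⟩ hLM' h
  simp only [Finset.coe_product, Set.mem_prod, Finset.mem_coe] at hLM hLM' h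
  rw [Prod.mk.injEq]
  constructor
  · refine eq_of_onLine_of_onLine (meet_ne_left hnoline L hLM.2).symm
      (mem_pencil.1 hLM.1).2 (onLine_meet_left L M) (mem_pencil.1 hLM'.1).2 ?_
    exact h ▸ onLine_meet_left L' M'
  · refine eq_of_onLine_of_onLine (meet_ne_right hnoline hLM.1 M).symm
      (mem_pencil.1 hLM.2).2 (onLine_meet_right L M) (mem_pencil.1 hLM'.2).2 ?_
    exact h ▸ onLine_meet_right L' M'

end Configuration

theorem two_pencils_a_general {K : Type*} [Field K] (s : ℕ) (𝓛 : Finset (PLine K))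
    (hs : (SingPts 𝓛).ncard = s) (hs2 : 2 ≤ s)
    (P₁ P₂ : PPoint K) (h1 : P₁ ∈ SingPts 𝓛) (h2 : P₂ ∈ SingPts 𝓛) (hne : P₁ ≠ P₂)
    (hnoline : ¬ ∃ L ∈ 𝓛, OnLine P₁ L ∧ OnLine P₂ L) :
    mult 𝓛 P₁ * mult 𝓛 P₂ + 2 ≤ s := by
  classical
  set C := pencilIntersections 𝓛 P₁ P₂
  have hsub : ↑(insert P₁ (insert P₂ C)) ⊆ SingPts 𝓛 := by
    simp only [Finset.coe_insert, Set.insert_subset_iff]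
    exact ⟨h1, h2, coe_pencilIntersections_subset_singPts hnoline⟩
  calc mult 𝓛 P₁ * mult 𝓛 P₂ + 2 = (insert P₁ (insert P₂ C)).card := by
        have hP₁ : P₁ ∉ insert P₂ C := by
          simp [hne, C, left_notMem_pencilIntersections hnoline]
        rw [Finset.card_insert_of_notMem hP₁, Finset.card_insert_of_notMem
          (right_notMem_pencilIntersections hnoline), card_pencilIntersections hnoline]
    _ ≤ (SingPts 𝓛).ncard := by
        rw [← Set.ncard_coe_finset]
        exact Set.ncard_le_ncard hsub (Set.finite_of_ncard_ne_zero (by omega))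
    _ = s := hs

/-- Two Pencils Inequality, case a): if no configuration line passes through both singular
points `P₁` and `P₂`, then `m(P₁)·m(P₂) + 2 ≤ s`. -/
theorem two_pencils_a {K : Type*} [Field K] (d s : ℕ) (𝓛 : Finset (PLine K))
    (hd : 𝓛.card = d) (hs : (SingPts 𝓛).ncard = s) (hs2 : 2 ≤ s)
    (P₁ P₂ : PPoint K) (h1 : P₁ ∈ SingPts 𝓛) (h2 : P₂ ∈ SingPts 𝓛) (hne : P₁ ≠ P₂)
    (hnoline : ¬ ∃ L ∈ 𝓛, OnLine P₁ L ∧ OnLine P₂ L) :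
    mult 𝓛 P₁ * mult 𝓛 P₂ + 2 ≤ s :=
  two_pencils_a_general s 𝓛 hs hs2 P₁ P₂ h1 h2 hne hnoline
end

section
/- The absolute linear Harbourne constant for 10 lines equals −29/12: for every field K and every configuration 𝓛 of 10 mutually distinct lines in the projective plane over K, H_L(K,𝓛) ≥ −29/12, and there exists a configuration 𝓛 of 10 mutually distinct lines in the projective plane over the field 𝔽₃ with three elements having t_4(𝓛) = 3, t_3(𝓛) = 9, t_k(𝓛) = 0 otherwise, and H_L(𝔽₃,𝓛) = −29/12 (obtained by removing from the 13 lines of the plane over 𝔽₃ the three lines through a fixed point). -/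
open Finset

section LinAlg
variable {K : Type*} [Field K]

/-- dot product of coordinate triples -/
def dt (a b : Fin 3 → K) : K := a 0 * b 0 + a 1 * b 1 + a 2 * b 2

/-- cross product of coordinate triples -/
def cr (a b : Fin 3 → K) : Fin 3 → K :=
  ![a 1 * b 2 - a 2 * b 1, a 2 * b 0 - a 0 * b 2, a 0 * b 1 - a 1 * b 0]

lemma dt_comm (a b : Fin 3 → K) : dt a b = dt b a := by simp [dt]; ring

lemma dt_cr_left (a b : Fin 3 → K) : dt a (cr a b) = 0 := by simp [dt, cr]; ring

lemma dt_cr_right (a b : Fin 3 → K) : dt b (cr a b) = 0 := by simp [dt, cr]; ring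

lemma cr_triple (a x y : Fin 3 → K) :
    cr a (cr x y) = dt a y • x - dt a x • y := by
  funext i; fin_cases i <;> simp [dt, cr] <;> ring

lemma ne_zero_iff_coord (x : Fin 3 → K) : x ≠ 0 ↔ x 0 ≠ 0 ∨ x 1 ≠ 0 ∨ x 2 ≠ 0 := by
  constructor
  · intro h
    by_contra hc
    push_neg at hc
    exact h (by funext i; fin_cases i <;> simp [hc.1, hc.2.1, hc.2.2])
  · rintro (h | h | h) rfl <;> simp at h

lemma cr_eq_zero_imp {x y : Fin 3 → K} (h : cr x y = 0) (hx : x ≠ 0) :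
    ∃ c : K, y = c • x := by
  have h0 := congrFun h 0
  have h1 := congrFun h 1
  have h2 := congrFun h 2
  simp [cr] at h0 h1 h2
  rw [ne_zero_iff_coord] at hx
  rcases hx with hx | hx | hx
  · have e0 : y 0 = y 0 / x 0 * x 0 := by field_simp
    have e1 : y 1 = y 0 / x 0 * x 1 := by
      field_simp; first | linear_combination h2 | linear_combination -h2
    have e2 : y 2 = y 0 / x 0 * x 2 := by
      field_simp; first | linear_combination h1 | linear_combination -h1
    exact ⟨y 0 / x 0, by funext j; fin_cases j <;> first | exact e0 | exact e1 | exact e2⟩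
  · have e0 : y 0 = y 1 / x 1 * x 0 := by
      field_simp; first | linear_combination h2 | linear_combination -h2
    have e1 : y 1 = y 1 / x 1 * x 1 := by field_simp
    have e2 : y 2 = y 1 / x 1 * x 2 := by
      field_simp; first | linear_combination h0 | linear_combination -h0
    exact ⟨y 1 / x 1, by funext j; fin_cases j <;> first | exact e0 | exact e1 | exact e2⟩
  · have e0 : y 0 = y 2 / x 2 * x 0 := by
      field_simp; first | linear_combination h1 | linear_combination -h1
    have e1 : y 1 = y 2 / x 2 * x 1 := by
      field_simp; first | linear_combination h0 | linear_combination -h0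
    have e2 : y 2 = y 2 / x 2 * x 2 := by field_simp
    exact ⟨y 2 / x 2, by funext j; fin_cases j <;> first | exact e0 | exact e1 | exact e2⟩

end LinAlg

section Geom
variable {K : Type*} [Field K]

lemma smul_ne_zero_iff' {c : K} {x : Fin 3 → K} (hc : c ≠ 0) (hx : x ≠ 0) : c • x ≠ 0 :=
  smul_ne_zero hc hx

/-- Central lemma: if `a, b` both annihilate `x, y` (all nonzero), then either `a ∥ b`
or `x ∥ y`. -/
lemma prop_of_perp {a b x y : Fin 3 → K} (ha : a ≠ 0) (hx : x ≠ 0) (hy : y ≠ 0)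
    (hax : dt a x = 0) (hay : dt a y = 0) (hbx : dt b x = 0) (hby : dt b y = 0) :
    (∃ c : K, b = c • a) ∨ (∃ c : K, y = c • x) := by
  by_cases hcr : cr x y = 0
  · exact Or.inr (cr_eq_zero_imp hcr hx)
  · left
    have h1 : cr a (cr x y) = 0 := by
      rw [cr_triple, hax, hay]; simp
    have h2 : cr b (cr x y) = 0 := by
      rw [cr_triple, hbx, hby]; simp
    obtain ⟨c, hc⟩ := cr_eq_zero_imp h1 ha
    have hc0 : c ≠ 0 := by rintro rfl; simp at hc; exact hcr hc
    by_cases hb : b = 0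
    · exact ⟨0, by simp [hb]⟩
    obtain ⟨c', hc'⟩ := cr_eq_zero_imp h2 hb
    have hc'0 : c' ≠ 0 := by rintro rfl; simp at hc'; exact hcr hc'
    refine ⟨c'⁻¹ * c, ?_⟩
    have hba : c' • b = c • a := by rw [← hc, ← hc']
    have : b = c'⁻¹ • (c' • b) := by rw [smul_smul, inv_mul_cancel₀ hc'0, one_smul]
    rw [this, hba, smul_smul]

/-- any two coordinate triples admit a common nonzero perpendicular vector. -/
lemma exists_common_perp (a b : Fin 3 → K) : ∃ v : Fin 3 → K, v ≠ 0 ∧ dt a v = 0 ∧ dt b v = 0 := by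
  -- first: a single vector perpendicular to any given a, of a convenient shape
  have single : ∀ a : Fin 3 → K, ∃ v : Fin 3 → K, v ≠ 0 ∧ dt a v = 0 ∧ dt 0 v = 0 := by
    intro a
    by_cases h01 : a 0 = 0 ∧ a 1 = 0
    · exact ⟨![1, 0, 0], by simp [ne_zero_iff_coord], by simp [dt, h01.1], by simp [dt]⟩
    · refine ⟨![a 1, -(a 0), 0], ?_, by simp [dt]; ring, by simp [dt]⟩
      rw [ne_zero_iff_coord]
      rcases not_and_or.mp h01 with h | h
      · right; left; simpa using fun hh => h hh
      · left; simpa using fun hh => h hh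
  by_cases hcr : cr a b = 0
  · by_cases ha : a = 0
    · subst ha
      obtain ⟨v, hv, hbv, h0⟩ := single b
      exact ⟨v, hv, h0, hbv⟩
    · obtain ⟨c, hc⟩ := cr_eq_zero_imp hcr ha
      obtain ⟨v, hv, hav, -⟩ := single a
      refine ⟨v, hv, hav, ?_⟩
      subst hc
      have : dt (c • a) v = c * dt a v := by simp [dt]; ring
      rw [this, hav, mul_zero]
  · exact ⟨cr a b, hcr, dt_cr_left a b, dt_cr_right a b⟩

end Geom

section Bridge
variable {K : Type*} [Field K]

/-- coordinates of a dual functional -/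
def cvec (f : Module.Dual K (Fin 3 → K)) : Fin 3 → K :=
  ![f (Pi.single 0 1), f (Pi.single 1 1), f (Pi.single 2 1)]

lemma decomp (x : Fin 3 → K) :
    x = x 0 • (Pi.single 0 1 : Fin 3 → K) + x 1 • (Pi.single 1 1 : Fin 3 → K)
      + x 2 • (Pi.single 2 1 : Fin 3 → K) := by
  funext j; fin_cases j <;> simp [Pi.single_apply]

lemma apply_eq_dt (f : Module.Dual K (Fin 3 → K)) (x : Fin 3 → K) :
    f x = dt (cvec f) x := by
  conv_lhs => rw [decomp x]
  simp [dt, cvec, mul_comm]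

lemma cvec_eq_zero_iff (f : Module.Dual K (Fin 3 → K)) : cvec f = 0 ↔ f = 0 := by
  constructor
  · intro h
    apply LinearMap.ext
    intro x
    rw [apply_eq_dt, h]
    simp [dt]
  · rintro rfl; funext i; fin_cases i <;> simp [cvec]

lemma cvec_smul (c : K) (f : Module.Dual K (Fin 3 → K)) : cvec (c • f) = c • cvec f := by
  funext i; fin_cases i <;> simp [cvec]

/-- scaling representatives: if `f x = 0` for representatives, it holds for all reps -/
lemma onLine_mk_mk (v : Fin 3 → K) (hv : v ≠ 0) (f : Module.Dual K (Fin 3 → K)) (hf : f ≠ 0) :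
    OnLine (Projectivization.mk K v hv) (Projectivization.mk K f hf) ↔ f v = 0 := by
  obtain ⟨a, ha⟩ := Projectivization.exists_smul_eq_mk_rep K v hv
  obtain ⟨b, hb⟩ := Projectivization.exists_smul_eq_mk_rep K f hf
  unfold OnLine
  rw [← ha, ← hb, Units.smul_def, Units.smul_def, LinearMap.smul_apply, map_smul,
    smul_eq_mul, smul_eq_mul, mul_eq_zero, mul_eq_zero]
  simp [Units.ne_zero a, Units.ne_zero b]

lemma onLine_rep (P : PPoint K) (L : PLine K) : OnLine P L ↔ L.rep P.rep = 0 := Iff.rfl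

/-- The fundamental uniqueness dichotomy. -/
lemma unique_lemma {L L' : PLine K} {P Q : PPoint K}
    (hPL : OnLine P L) (hPL' : OnLine P L') (hQL : OnLine Q L) (hQL' : OnLine Q L') :
    L = L' ∨ P = Q := by
  set f := L.rep with hf
  set g := L'.rep with hg
  set x := P.rep with hx
  set y := Q.rep with hy
  have ha : cvec f ≠ 0 := fun h => L.rep_nonzero ((cvec_eq_zero_iff f).mp h)
  have h1 : dt (cvec f) x = 0 := by rw [← apply_eq_dt]; exact hPL
  have h2 : dt (cvec f) y = 0 := by rw [← apply_eq_dt]; exact hQL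
  have h3 : dt (cvec g) x = 0 := by rw [← apply_eq_dt]; exact hPL'
  have h4 : dt (cvec g) y = 0 := by rw [← apply_eq_dt]; exact hQL'
  rcases prop_of_perp ha P.rep_nonzero Q.rep_nonzero h1 h2 h3 h4 with ⟨c, hc⟩ | ⟨c, hc⟩
  · left
    have hgf : g = c • f := by
      apply LinearMap.ext
      intro z
      rw [LinearMap.smul_apply, smul_eq_mul, apply_eq_dt, apply_eq_dt, hc]
      simp [dt]
      ring
    have : Projectivization.mk K g L'.rep_nonzero = Projectivization.mk K f L.rep_nonzero := by
      rw [Projectivization.mk_eq_mk_iff']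
      exact ⟨c, hgf.symm⟩
    rw [← Projectivization.mk_rep L, ← Projectivization.mk_rep L']
    exact this.symm
  · right
    have : Projectivization.mk K y Q.rep_nonzero = Projectivization.mk K x P.rep_nonzero := by
      rw [Projectivization.mk_eq_mk_iff']
      exact ⟨c, hc.symm⟩
    rw [← Projectivization.mk_rep P, ← Projectivization.mk_rep Q]
    exact this.symm

/-- Any two lines share a point. -/
lemma exists_common_point (L L' : PLine K) : ∃ P : PPoint K, OnLine P L ∧ OnLine P L' := by
  obtain ⟨v, hv, h1, h2⟩ := exists_common_perp (cvec L.rep) (cvec L'.rep)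
  obtain ⟨a, ha⟩ := Projectivization.exists_smul_eq_mk_rep K v hv
  refine ⟨Projectivization.mk K v hv, ?_, ?_⟩ <;>
  · rw [onLine_rep, ← ha]
    rw [Units.smul_def, map_smul, apply_eq_dt]
    first
      | (rw [show dt (cvec (Projectivization.rep L)) v = 0 from h1]; simp)
      | (rw [show dt (cvec (Projectivization.rep L')) v = 0 from h2]; simp)

end Bridge

section Counting
open scoped Classical
variable {K : Type*} [Field K]

/-- lines of `𝓛` through `P`, as a finset -/
noncomputable def multF (𝓛 : Finset (PLine K)) (P : PPoint K) : Finset (PLine K) :=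
  𝓛.filter (fun L => OnLine P L)

lemma coe_multF (𝓛 : Finset (PLine K)) (P : PPoint K) :
    (multF 𝓛 P : Set (PLine K)) = {L : PLine K | L ∈ 𝓛 ∧ OnLine P L} := by
  ext L; simp [multF]

lemma mult_eq_card (𝓛 : Finset (PLine K)) (P : PPoint K) :
    mult 𝓛 P = (multF 𝓛 P).card := by
  rw [mult, ← coe_multF, Set.ncard_coe_finset]

lemma mem_multF {𝓛 : Finset (PLine K)} {P : PPoint K} {L : PLine K} :
    L ∈ multF 𝓛 P ↔ L ∈ 𝓛 ∧ OnLine P L := by simp [multF]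

/-- the common point of two lines (choice) -/
noncomputable def cp (L L' : PLine K) : PPoint K :=
  Classical.choose (exists_common_point L L')

lemma cp_left (L L' : PLine K) : OnLine (cp L L') L :=
  (Classical.choose_spec (exists_common_point L L')).1

lemma cp_right (L L' : PLine K) : OnLine (cp L L') L' :=
  (Classical.choose_spec (exists_common_point L L')).2

lemma eq_cp {L L' : PLine K} {P : PPoint K} (h : L ≠ L')
    (h1 : OnLine P L) (h2 : OnLine P L') : P = cp L L' := by
  rcases unique_lemma h1 h2 (cp_left L L') (cp_right L L') with h' | h'
  · exact absurd h' h
  · exact h'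

/-- the singular points as a finset -/
noncomputable def singF (𝓛 : Finset (PLine K)) : Finset (PPoint K) :=
  𝓛.offDiag.image (fun p => cp p.1 p.2)

lemma singPts_eq_coe (𝓛 : Finset (PLine K)) : SingPts 𝓛 = ↑(singF 𝓛) := by
  ext P
  simp only [SingPts, Set.mem_setOf_eq, singF, Finset.coe_image, Set.mem_image,
    Finset.mem_coe, Finset.mem_offDiag]
  constructor
  · intro h
    rw [mult_eq_card] at h
    obtain ⟨L, hL, L', hL', hne⟩ := Finset.one_lt_card.mp h
    rw [mem_multF] at hL hL'
    exact ⟨(L, L'), ⟨hL.1, hL'.1, hne⟩, (eq_cp hne hL.2 hL'.2).symm⟩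
  · rintro ⟨⟨L, L'⟩, ⟨hL, hL', hne⟩, rfl⟩
    rw [mult_eq_card]
    apply Finset.one_lt_card.mpr
    exact ⟨L, mem_multF.mpr ⟨hL, cp_left L L'⟩, L', mem_multF.mpr ⟨hL', cp_right L L'⟩, hne⟩

lemma offDiag_eq_biUnion (𝓛 : Finset (PLine K)) :
    𝓛.offDiag = (singF 𝓛).biUnion (fun P => (multF 𝓛 P).offDiag) := by
  ext ⟨L, L'⟩
  simp only [Finset.mem_offDiag, Finset.mem_biUnion, mem_multF]
  constructor
  · rintro ⟨hL, hL', hne⟩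
    refine ⟨cp L L', ?_, ⟨hL, cp_left L L'⟩, ⟨hL', cp_right L L'⟩, hne⟩
    rw [← Finset.mem_coe, ← singPts_eq_coe]
    show 2 ≤ mult 𝓛 (cp L L')
    rw [mult_eq_card]
    apply Finset.one_lt_card.mpr
    exact ⟨L, mem_multF.mpr ⟨hL, cp_left L L'⟩, L', mem_multF.mpr ⟨hL', cp_right L L'⟩, hne⟩
  · rintro ⟨P, _, ⟨hL, _⟩, ⟨hL', _⟩, hne⟩
    exact ⟨hL, hL', hne⟩

lemma multF_offDiag_disjoint (𝓛 : Finset (PLine K)) :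
    ∀ P ∈ singF 𝓛, ∀ Q ∈ singF 𝓛, P ≠ Q →
      Disjoint ((multF 𝓛 P).offDiag) ((multF 𝓛 Q).offDiag) := by
  intro P _ Q _ hPQ
  rw [Finset.disjoint_left]
  rintro ⟨L, L'⟩ h1 h2
  rw [Finset.mem_offDiag] at h1 h2
  obtain ⟨hL, hL', hne⟩ := h1
  obtain ⟨hL2, hL2', -⟩ := h2
  rw [mem_multF] at hL hL' hL2 hL2'
  rcases unique_lemma hL.2 hL'.2 hL2.2 hL2'.2 with h | h
  · exact hne h
  · exact hPQ h

/-- pair count: `∑ m_P (m_P - 1) = d(d-1)` -/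
lemma pair_count (𝓛 : Finset (PLine K)) :
    ∑ P ∈ singF 𝓛, (mult 𝓛 P * mult 𝓛 P - mult 𝓛 P) = 𝓛.card * 𝓛.card - 𝓛.card := by
  have := Finset.card_biUnion (multF_offDiag_disjoint 𝓛)
  rw [← offDiag_eq_biUnion] at this
  rw [← Finset.offDiag_card, this]
  apply Finset.sum_congr rfl
  intro P _
  rw [Finset.offDiag_card, mult_eq_card]

end Counting

section Pencil
open scoped Classical
variable {K : Type*} [Field K]

lemma multF_subset (𝓛 : Finset (PLine K)) (P : PPoint K) : multF 𝓛 P ⊆ 𝓛 :=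
  Finset.filter_subset _ _

lemma pencil_s18 (𝓛 : Finset (PLine K)) (P0 : PPoint K) :
    mult 𝓛 P0 * (𝓛.card - mult 𝓛 P0) ≤
      ∑ Q ∈ (singF 𝓛).erase P0, min (mult 𝓛 Q - 1) (𝓛.card - mult 𝓛 P0) := by
  classical
  set k := mult 𝓛 P0 with hk
  set A := (multF 𝓛 P0) ×ˢ (𝓛 \ multF 𝓛 P0) with hA
  set B : PPoint K → Finset (PLine K × PLine K) :=
    fun Q => (multF 𝓛 P0 ∩ multF 𝓛 Q) ×ˢ (multF 𝓛 Q \ multF 𝓛 P0) with hB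
  have cardA : A.card = k * (𝓛.card - k) := by
    rw [hA, Finset.card_product, Finset.card_sdiff_of_subset (multF_subset 𝓛 P0), hk, mult_eq_card]
  have hsub : A ⊆ ((singF 𝓛).erase P0).biUnion B := by
    rintro ⟨L, L'⟩ hLL
    rw [hA, Finset.mem_product] at hLL
    obtain ⟨hL, hL'⟩ := hLL
    rw [Finset.mem_sdiff] at hL'
    have hLon : OnLine P0 L := (mem_multF.mp hL).2
    have hL'noton : ¬ OnLine P0 L' := fun h => hL'.2 (mem_multF.mpr ⟨hL'.1, h⟩)
    have hne : L ≠ L' := fun h => hL'noton (h ▸ hLon)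
    set Q := cp L L' with hQ
    have hQon : OnLine Q L := cp_left L L'
    have hQon' : OnLine Q L' := cp_right L L'
    have hQsing : Q ∈ singF 𝓛 := by
      rw [singF, Finset.mem_image]
      exact ⟨(L, L'), Finset.mem_offDiag.mpr ⟨(mem_multF.mp hL).1, hL'.1, hne⟩, rfl⟩
    have hQne : Q ≠ P0 := fun h => hL'noton (h ▸ hQon')
    rw [Finset.mem_biUnion]
    refine ⟨Q, Finset.mem_erase.mpr ⟨hQne, hQsing⟩, ?_⟩
    rw [hB, Finset.mem_product, Finset.mem_inter, Finset.mem_sdiff]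
    exact ⟨⟨hL, mem_multF.mpr ⟨(mem_multF.mp hL).1, hQon⟩⟩,
      mem_multF.mpr ⟨hL'.1, hQon'⟩, hL'.2⟩
  have cardB : ∀ Q ∈ (singF 𝓛).erase P0, (B Q).card ≤ min (mult 𝓛 Q - 1) (𝓛.card - k) := by
    intro Q hQ
    have hQne : Q ≠ P0 := (Finset.mem_erase.mp hQ).1
    rw [hB, Finset.card_product]
    have hc1 : (multF 𝓛 P0 ∩ multF 𝓛 Q).card ≤ 1 := by
      rw [Finset.card_le_one]
      intro a ha b hb
      rw [Finset.mem_inter, mem_multF, mem_multF] at ha hb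
      rcases unique_lemma ha.1.2 hb.1.2 ha.2.2 hb.2.2 with h | h
      · exact h
      · exact absurd h (fun hh => hQne hh.symm)
    rcases Nat.eq_zero_or_pos (multF 𝓛 P0 ∩ multF 𝓛 Q).card with h0 | hpos
    · rw [h0, zero_mul]; exact Nat.zero_le _
    · have h1 : (multF 𝓛 P0 ∩ multF 𝓛 Q).card = 1 := le_antisymm hc1 hpos
      rw [h1, one_mul]
      obtain ⟨Lpq, hLpq⟩ := Finset.card_eq_one.mp h1
      have hmemQ : Lpq ∈ multF 𝓛 Q := (Finset.mem_inter.mp (hLpq ▸ Finset.mem_singleton_self Lpq)).2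
      have hmemP : Lpq ∈ multF 𝓛 P0 := (Finset.mem_inter.mp (hLpq ▸ Finset.mem_singleton_self Lpq)).1
      apply le_min
      · calc (multF 𝓛 Q \ multF 𝓛 P0).card ≤ ((multF 𝓛 Q).erase Lpq).card := by
              apply Finset.card_le_card
              intro x hx
              rw [Finset.mem_sdiff] at hx
              exact Finset.mem_erase.mpr ⟨fun h => hx.2 (h ▸ hmemP), hx.1⟩
          _ = (multF 𝓛 Q).card - 1 := Finset.card_erase_of_mem hmemQ
          _ = mult 𝓛 Q - 1 := by rw [mult_eq_card]
      · calc (multF 𝓛 Q \ multF 𝓛 P0).card ≤ (𝓛 \ multF 𝓛 P0).card :=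
              Finset.card_le_card (fun x hx => by
                rw [Finset.mem_sdiff] at hx ⊢
                exact ⟨(mem_multF.mp hx.1).1, hx.2⟩)
          _ = 𝓛.card - k := by rw [Finset.card_sdiff_of_subset (multF_subset 𝓛 P0), hk, mult_eq_card]
  calc k * (𝓛.card - k) = A.card := cardA.symm
    _ ≤ (((singF 𝓛).erase P0).biUnion B).card := Finset.card_le_card hsub
    _ ≤ ∑ Q ∈ (singF 𝓛).erase P0, (B Q).card := Finset.card_biUnion_le
    _ ≤ ∑ Q ∈ (singF 𝓛).erase P0, min (mult 𝓛 Q - 1) (𝓛.card - k) :=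
        Finset.sum_le_sum cardB

end Pencil

section Final
open scoped Classical
variable {K : Type*} [Field K]

lemma arith (t2 t3 t4 t5 t6 t7 t8 t9 t10 k : ℕ)
    (hk2 : 2 ≤ k) (hk10 : k ≤ 10)
    (h90 : 2*t2+6*t3+12*t4+20*t5+30*t6+42*t7+56*t8+72*t9+90*t10 = 90)
    (htk : (k = 2 → 1 ≤ t2) ∧ (k = 3 → 1 ≤ t3) ∧ (k = 4 → 1 ≤ t4) ∧ (k = 5 → 1 ≤ t5) ∧
      (k = 6 → 1 ≤ t6) ∧ (k = 7 → 1 ≤ t7) ∧ (k = 8 → 1 ≤ t8) ∧ (k = 9 → 1 ≤ t9) ∧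
      (k = 10 → 1 ≤ t10))
    (hmax : (k < 3 → t3 = 0) ∧ (k < 4 → t4 = 0) ∧ (k < 5 → t5 = 0) ∧ (k < 6 → t6 = 0) ∧
      (k < 7 → t7 = 0) ∧ (k < 8 → t8 = 0) ∧ (k < 9 → t9 = 0) ∧ (k < 10 → t10 = 0))
    (hpencil : k*(10-k) + min (k-1) (10-k) ≤
      min (2-1) (10-k) * t2 + min (3-1) (10-k) * t3 + min (4-1) (10-k) * t4 +
      min (5-1) (10-k) * t5 + min (6-1) (10-k) * t6 + min (7-1) (10-k) * t7 +
      min (8-1) (10-k) * t8 + min (9-1) (10-k) * t9 + min (10-1) (10-k) * t10) :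
    12*(2*t2+3*t3+4*t4+5*t5+6*t6+7*t7+8*t8+9*t9+10*t10) ≤
      120 + 29*(t2+t3+t4+t5+t6+t7+t8+t9+t10) := by
  interval_cases k <;> (simp [Nat.min_def] at hpencil ⊢) <;> omega

lemma mult_le_card (𝓛 : Finset (PLine K)) (P : PPoint K) : mult 𝓛 P ≤ 𝓛.card := by
  rw [mult_eq_card]
  exact Finset.card_le_card (multF_subset 𝓛 P)

lemma sum_fiber (𝓛 : Finset (PLine K)) (hcard : 𝓛.card = 10) (g : ℕ → ℕ) :
    ∑ P ∈ singF 𝓛, g (mult 𝓛 P) =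
      ∑ j ∈ Finset.Icc 2 10, g j * ((singF 𝓛).filter (fun P => mult 𝓛 P = j)).card := by
  rw [← Finset.sum_fiberwise_of_maps_to (g := fun P => mult 𝓛 P) (t := Finset.Icc 2 10) ?_]
  · apply Finset.sum_congr rfl
    intro j _
    rw [Finset.sum_congr rfl (fun P hP => by
      rw [(Finset.mem_filter.mp hP).2]), Finset.sum_const, smul_eq_mul, mul_comm]
  · intro P hP
    rw [Finset.mem_Icc]
    constructor
    · have : P ∈ SingPts 𝓛 := by rw [singPts_eq_coe]; exact hP
      exact this
    · rw [← hcard]; exact mult_le_card 𝓛 P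

lemma Icc_expand (g : ℕ → ℕ) : ∑ j ∈ Finset.Icc 2 10, g j =
    g 2 + g 3 + g 4 + g 5 + g 6 + g 7 + g 8 + g 9 + g 10 := by
  rw [show (Finset.Icc 2 10 : Finset ℕ) = {2,3,4,5,6,7,8,9,10} by rfl]
  simp [Finset.sum_insert, Finset.mem_insert]
  ring

/-- the main inequality in natural numbers -/
lemma main_nat (𝓛 : Finset (PLine K)) (hcard : 𝓛.card = 10) :
    12 * (∑ P ∈ singF 𝓛, mult 𝓛 P) ≤ 120 + 29 * (singF 𝓛).card := by
  have hne : (singF 𝓛).Nonempty := by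
    have h2 : 1 < 𝓛.card := by omega
    obtain ⟨L, hL, L', hL', hne⟩ := Finset.one_lt_card.mp h2
    exact ⟨cp L L', Finset.mem_image.mpr ⟨(L, L'), Finset.mem_offDiag.mpr ⟨hL, hL', hne⟩, rfl⟩⟩
  obtain ⟨P0, hP0, hmax⟩ := Finset.exists_max_image (singF 𝓛) (mult 𝓛) hne
  set k := mult 𝓛 P0 with hk
  have hk2 : 2 ≤ k := by
    have : P0 ∈ SingPts 𝓛 := by rw [singPts_eq_coe]; exact hP0
    exact this
  have hk10 : k ≤ 10 := by rw [← hcard]; exact mult_le_card 𝓛 P0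
  set t : ℕ → ℕ := fun j => ((singF 𝓛).filter (fun P => mult 𝓛 P = j)).card with ht
  -- pair count
  have h90 : ∑ P ∈ singF 𝓛, (mult 𝓛 P * mult 𝓛 P - mult 𝓛 P) = 90 := by
    rw [pair_count, hcard]
  have e90 : ∑ P ∈ singF 𝓛, (mult 𝓛 P * mult 𝓛 P - mult 𝓛 P)
      = ∑ j ∈ Finset.Icc 2 10, (j*j - j) * t j := sum_fiber 𝓛 hcard (fun m => m*m - m)
  rw [e90, Icc_expand (fun j => (j*j - j) * t j)] at h90
  
  -- pencil
  have hpen := pencil_s18 𝓛 P0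
  rw [hcard, ← hk] at hpen
  have hpen2 : k*(10-k) + min (k-1) (10-k) ≤
      ∑ Q ∈ singF 𝓛, min (mult 𝓛 Q - 1) (10 - k) := by
    rw [← Finset.sum_erase_add _ _ hP0, ← hk]
    omega
  have epen : ∑ Q ∈ singF 𝓛, min (mult 𝓛 Q - 1) (10 - k)
      = ∑ j ∈ Finset.Icc 2 10, min (j-1) (10-k) * t j := sum_fiber 𝓛 hcard (fun m => min (m-1) (10-k))
  rw [epen, Icc_expand (fun j => min (j-1) (10-k) * t j)] at hpen2
  
  -- goal sums
  have egoal : ∑ P ∈ singF 𝓛, mult 𝓛 P = ∑ j ∈ Finset.Icc 2 10, j * t j :=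
    sum_fiber 𝓛 hcard (fun m => m)
  rw [egoal, Icc_expand (fun j => j * t j)]
  have ecard : (singF 𝓛).card = ∑ j ∈ Finset.Icc 2 10, 1 * t j := by
    rw [← sum_fiber 𝓛 hcard (fun _ => 1)]
    simp
  rw [ecard, Icc_expand (fun j => 1 * t j)]
  -- max: fibers above k are empty
  have hzero : ∀ j, k < j → t j = 0 := by
    intro j hj
    rw [ht]
    simp only [Finset.card_eq_zero, Finset.filter_eq_empty_iff]
    intro P hP hPj
    exact absurd (hmax P hP) (by omega)
  have hone : 1 ≤ t k := by
    rw [ht]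
    apply Finset.card_pos.mpr
    exact ⟨P0, Finset.mem_filter.mpr ⟨hP0, rfl⟩⟩
  clear_value t k
  have key := arith (t 2) (t 3) (t 4) (t 5) (t 6) (t 7) (t 8) (t 9) (t 10) k hk2 hk10
    (by omega)
    (by refine ⟨?_,?_,?_,?_,?_,?_,?_,?_,?_⟩ <;> (rintro rfl; exact hone))
    (by refine ⟨?_,?_,?_,?_,?_,?_,?_,?_⟩ <;> (intro h; exact hzero _ h))
    hpen2
  omega
end Final

section Part1
open scoped Classical
variable {K : Type*} [Field K]

lemma singF_nonempty (𝓛 : Finset (PLine K)) (hcard : 2 ≤ 𝓛.card) : (singF 𝓛).Nonempty := by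
  obtain ⟨L, hL, L', hL', hne⟩ := Finset.one_lt_card.mp (show 1 < 𝓛.card by omega)
  exact ⟨cp L L', Finset.mem_image.mpr ⟨(L, L'), Finset.mem_offDiag.mpr ⟨hL, hL', hne⟩, rfl⟩⟩

theorem lower_bound (𝓛 : Finset (PLine K)) (h : 𝓛.card = 10) : -29/12 ≤ HL 𝓛 := by
  have hne := singF_nonempty 𝓛 (by omega)
  have hs : 0 < (singF 𝓛).card := Finset.card_pos.mpr hne
  have hM := main_nat 𝓛 h
  have h90 : ∑ P ∈ singF 𝓛, (mult 𝓛 P * mult 𝓛 P - mult 𝓛 P) = 90 := by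
    rw [pair_count, h]
  have hsum : ∑ P ∈ singF 𝓛, (mult 𝓛 P)^2 = 90 + ∑ P ∈ singF 𝓛, mult 𝓛 P := by
    rw [← h90, ← Finset.sum_add_distrib]
    apply Finset.sum_congr rfl
    intro P hP
    have h2 : 2 ≤ mult 𝓛 P := by
      have : P ∈ SingPts 𝓛 := by rw [singPts_eq_coe]; exact hP
      exact this
    have hle : mult 𝓛 P ≤ mult 𝓛 P * mult 𝓛 P :=
      calc mult 𝓛 P = mult 𝓛 P * 1 := (mul_one _).symm
        _ ≤ mult 𝓛 P * mult 𝓛 P := Nat.mul_le_mul_left _ (by omega)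
    rw [pow_two]
    omega
  unfold HL
  rw [singPts_eq_coe, Set.ncard_coe_finset, finsum_mem_coe_finset, h]
  have hcast : ∑ P ∈ singF 𝓛, (mult 𝓛 P : ℚ)^2
      = ((90 + ∑ P ∈ singF 𝓛, mult 𝓛 P : ℕ) : ℚ) := by
    rw [← hsum]
    push_cast
    rfl
  rw [hcast, le_div_iff₀ (by exact_mod_cast hs)]
  have hMQ : ((12 * ∑ P ∈ singF 𝓛, mult 𝓛 P : ℕ) : ℚ)
      ≤ ((120 + 29 * (singF 𝓛).card : ℕ) : ℚ) := Nat.cast_le.mpr hM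
  push_cast at hMQ ⊢
  linarith

end Part1

section Part2
open scoped Classical

abbrev K3 := ZMod 3

def phi (a : Fin 3 → K3) : Module.Dual K3 (Fin 3 → K3) :=
  a 0 • LinearMap.proj 0 + a 1 • LinearMap.proj 1 + a 2 • LinearMap.proj 2

lemma phi_apply (a x : Fin 3 → K3) : phi a x = dt a x := by
  simp [phi, dt, mul_comm]

lemma phi_single (a : Fin 3 → K3) (i : Fin 3) : phi a (Pi.single i 1) = a i := by
  rw [phi_apply]
  fin_cases i <;> simp [dt, Pi.single_apply]

lemma phi_ne_zero {a : Fin 3 → K3} (ha : a ≠ 0) : phi a ≠ 0 := by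
  intro h
  apply ha
  funext i
  have := phi_single a i
  rw [h] at this
  simpa using this.symm

/-- lines from coordinate vectors -/
noncomputable def mkL (a : {a : Fin 3 → K3 // a ≠ 0}) : PLine K3 :=
  Projectivization.mk K3 (phi a.1) (phi_ne_zero a.2)

noncomputable def mkP (v : {v : Fin 3 → K3 // v ≠ 0}) : PPoint K3 :=
  Projectivization.mk K3 v.1 v.2

lemma mkL_eq_iff (a b : {a : Fin 3 → K3 // a ≠ 0}) :
    mkL a = mkL b ↔ ∃ c : K3, c • b.1 = a.1 := by
  rw [mkL, mkL, Projectivization.mk_eq_mk_iff']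
  constructor
  · rintro ⟨c, hc⟩
    refine ⟨c, funext fun i => ?_⟩
    have := congrArg (fun f => f (Pi.single i 1)) hc
    simpa [phi_single] using this
  · rintro ⟨c, hc⟩
    refine ⟨c, ?_⟩
    apply LinearMap.ext
    intro x
    rw [LinearMap.smul_apply, phi_apply, phi_apply, ← hc]
    simp [dt]
    ring

lemma mkP_eq_iff (a b : {v : Fin 3 → K3 // v ≠ 0}) :
    mkP a = mkP b ↔ ∃ c : K3, c • b.1 = a.1 := Projectivization.mk_eq_mk_iff' _ _ _ _ _

lemma onLine_mkP_mkL (v : {v : Fin 3 → K3 // v ≠ 0}) (a : {a : Fin 3 → K3 // a ≠ 0}) :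
    OnLine (mkP v) (mkL a) ↔ dt a.1 v.1 = 0 := by
  rw [mkP, mkL, onLine_mk_mk, phi_apply]

/-- the ten line coordinate vectors -/
def lvecs : Finset {a : Fin 3 → K3 // a ≠ 0} :=
  { ⟨![1,0,0], by decide⟩, ⟨![0,0,1], by decide⟩, ⟨![1,0,1], by decide⟩,
    ⟨![1,0,2], by decide⟩, ⟨![0,1,1], by decide⟩, ⟨![0,1,2], by decide⟩,
    ⟨![1,1,1], by decide⟩, ⟨![1,1,2], by decide⟩, ⟨![1,2,1], by decide⟩,
    ⟨![1,2,2], by decide⟩ }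

/-- the thirteen point coordinate vectors -/
def pvecs : Finset {v : Fin 3 → K3 // v ≠ 0} :=
  { ⟨![1,0,0], by decide⟩, ⟨![0,1,0], by decide⟩, ⟨![0,0,1], by decide⟩,
    ⟨![1,1,0], by decide⟩, ⟨![1,2,0], by decide⟩, ⟨![1,0,1], by decide⟩,
    ⟨![1,0,2], by decide⟩, ⟨![0,1,1], by decide⟩, ⟨![0,1,2], by decide⟩,
    ⟨![1,1,1], by decide⟩, ⟨![1,1,2], by decide⟩, ⟨![1,2,1], by decide⟩,
    ⟨![1,2,2], by decide⟩ }

noncomputable def config : Finset (PLine K3) := lvecs.image mkL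

def mval (v : Fin 3 → K3) : ℕ := (lvecs.filter (fun a => dt a.1 v = 0)).card

lemma lvecs_scale : ∀ a ∈ lvecs, ∀ b ∈ lvecs, (∃ c : K3, c • b.1 = a.1) → a = b := by decide

lemma pvecs_scale : ∀ a ∈ pvecs, ∀ b ∈ pvecs, (∃ c : K3, c • b.1 = a.1) → a = b := by decide

lemma mkL_injOn : Set.InjOn mkL ↑lvecs := by
  intro a ha b hb h
  exact lvecs_scale a ha b hb ((mkL_eq_iff a b).mp h)

lemma mkP_injOn : Set.InjOn mkP ↑pvecs := by
  intro a ha b hb h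
  exact pvecs_scale a ha b hb ((mkP_eq_iff a b).mp h)

lemma config_card : config.card = 10 := by
  rw [config, Finset.card_image_of_injOn mkL_injOn]
  decide

lemma pvecs_complete' : ∀ v : Fin 3 → K3, v ≠ 0 → ∃ w ∈ pvecs, ∃ c : K3, c • w.1 = v := by
  decide

lemma pvecs_complete (P : PPoint K3) : ∃ w ∈ pvecs, P = mkP w := by
  induction P using Projectivization.ind with
  | h v hv =>
    obtain ⟨w, hw, c, hc⟩ := pvecs_complete' v hv
    exact ⟨w, hw, (Projectivization.mk_eq_mk_iff' _ _ _ _ _).mpr ⟨c, hc⟩⟩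

lemma mult_config (v : {v : Fin 3 → K3 // v ≠ 0}) : mult config (mkP v) = mval v.1 := by
  rw [mult_eq_card, multF, config, Finset.filter_image]
  rw [Finset.filter_congr (fun a _ => by rw [onLine_mkP_mkL] : ∀ a ∈ lvecs,
    (OnLine (mkP v) (mkL a) ↔ dt a.1 v.1 = 0))]
  rw [Finset.card_image_of_injOn (mkL_injOn.mono (by
    intro x hx
    simp only [Finset.coe_filter, Set.mem_setOf_eq] at hx
    exact hx.1)), mval]

end Part2

section Part2b
open scoped Classical

lemma filter_sub (p : {v : Fin 3 → K3 // v ≠ 0} → Prop) [DecidablePred p] :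
    ↑(pvecs.filter p) ⊆ (pvecs : Set {v : Fin 3 → K3 // v ≠ 0}) := by
  intro x hx
  simp only [Finset.coe_filter, Set.mem_setOf_eq] at hx
  exact hx.1

lemma fiber_eq (k : ℕ) :
    {P : PPoint K3 | mult config P = k}
      = ↑((pvecs.filter (fun w => mval w.1 = k)).image mkP) := by
  ext P
  simp only [Set.mem_setOf_eq, Finset.coe_image, Set.mem_image, Finset.mem_coe,
    Finset.mem_filter]
  constructor
  · intro h
    obtain ⟨w, hw, rfl⟩ := pvecs_complete P
    exact ⟨w, ⟨hw, by rw [← mult_config]; exact h⟩, rfl⟩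
  · rintro ⟨w, ⟨hw, hm⟩, rfl⟩
    rw [mult_config]; exact hm

lemma tk_eq (k : ℕ) : tk config k = (pvecs.filter (fun w => mval w.1 = k)).card := by
  rw [tk, fiber_eq, Set.ncard_coe_finset,
    Finset.card_image_of_injOn (mkP_injOn.mono (filter_sub _))]

lemma tk4 : tk config 4 = 3 := by rw [tk_eq]; decide

lemma tk3 : tk config 3 = 9 := by rw [tk_eq]; decide

lemma mval_values : ∀ w ∈ pvecs, mval w.1 = 1 ∨ mval w.1 = 3 ∨ mval w.1 = 4 := by decide

lemma tk_other : ∀ k, 2 ≤ k → k ≠ 3 → k ≠ 4 → tk config k = 0 := by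
  intro k h2 h3 h4
  rw [tk_eq, Finset.card_eq_zero, Finset.filter_eq_empty_iff]
  intro w hw
  rcases mval_values w hw with h | h | h <;> omega

lemma sing_eq : SingPts config = ↑((pvecs.filter (fun w => 2 ≤ mval w.1)).image mkP) := by
  ext P
  simp only [SingPts, Set.mem_setOf_eq, Finset.coe_image, Set.mem_image, Finset.mem_coe,
    Finset.mem_filter]
  constructor
  · intro h
    obtain ⟨w, hw, rfl⟩ := pvecs_complete P
    exact ⟨w, ⟨hw, by rw [← mult_config]; exact h⟩, rfl⟩
  · rintro ⟨w, ⟨hw, hm⟩, rfl⟩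
    rw [mult_config]; exact hm

lemma s_card : (SingPts config).ncard = 12 := by
  rw [sing_eq, Set.ncard_coe_finset,
    Finset.card_image_of_injOn (mkP_injOn.mono (filter_sub _))]
  decide

lemma HL_config : HL config = -29/12 := by
  rw [HL, config_card, s_card, sing_eq, finsum_mem_coe_finset]
  rw [Finset.sum_image (fun x hx y hy h =>
    mkP_injOn (filter_sub _ hx) (filter_sub _ hy) h)]
  have hc : ∀ w ∈ pvecs.filter (fun w => 2 ≤ mval w.1),
      (mult config (mkP w) : ℚ)^2 = ((mval w.1 : ℕ) : ℚ)^2 := by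
    intro w _
    rw [mult_config]
  rw [Finset.sum_congr rfl hc]
  have hnat : ∑ w ∈ pvecs.filter (fun w => 2 ≤ mval w.1), (mval w.1)^2 = 129 := by decide
  have hq : ∑ w ∈ pvecs.filter (fun w => 2 ≤ mval w.1), ((mval w.1 : ℕ) : ℚ)^2
      = ((∑ w ∈ pvecs.filter (fun w => 2 ≤ mval w.1), (mval w.1)^2 : ℕ) : ℚ) := by
    push_cast
    rfl
  rw [hq, hnat]
  norm_num

end Part2b

/-- The absolute linear Harbourne constant for `10` lines equals `−29/12`, attained in
`ℙ²(𝔽₃)` by a configuration with `t₄ = 3`, `t₃ = 9` and no other singular points. -/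
theorem HL_ten_lines_absolute :
    (∀ (K : Type*) [Field K] (𝓛 : Finset (PLine K)), 𝓛.card = 10 → -29/12 ≤ HL 𝓛) ∧
    (∃ 𝓛 : Finset (PLine (ZMod 3)), 𝓛.card = 10 ∧ tk 𝓛 4 = 3 ∧ tk 𝓛 3 = 9 ∧
      (∀ k, 2 ≤ k → k ≠ 3 → k ≠ 4 → tk 𝓛 k = 0) ∧ HL 𝓛 = -29/12) := by
  constructor
  · intro K _ 𝓛 h
    exact lower_bound 𝓛 h
  · exact ⟨config, config_card, tk4, tk3, tk_other, HL_config⟩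
end
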